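/- If the yaw dynamics satisfy ψ''(t) = (φ'(t)·θ'(t)·(I_x − I_y) + τ(t))/I_z, where the control torque is τ = τ_eq + τ_sw with τ_eq = I_z·(v' − γ(ψ' − ᵈψ')) − φ'θ'(I_x − I_y) and τ_sw = −I_z·(c₁·sg(s) + c₂·s), then the Lyapunov function V(t) = (1/2)s(t)² has derivative V'(t) = −c₁·s(t)·sg(s(t)) − c₂·s(t)² ≤ 0 for all t; hence the yaw angle control system is Lyapunov stable. -/

import Mathlib

/-
The equivalent torque cancels the gyroscopic coupling `φ'θ'(I_x − I_y)` and makes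
`ψ'' = v' − γ(ψ' − ᵈψ') − (c₁·sg(s) + c₂·s)`, so on closed loop the sliding surface obeys `s' = −(c₁·sg(s) + c₂·s)`. Hence `V = s²/2` has
`V' = s·s' = −c₁·s·sg(s) − c₂·s²`, which is nonpositive because `sg` has the sign of its argument.
-/

/-- The saturated sign function with parameter `ε`. -/
noncomputable def sg (ε x : ℝ) : ℝ :=
  if x > ε then 1 else if x < -ε then -1 else x / ε

lemma mul_sg_nonneg {ε : ℝ} (hε : 0 ≤ ε) (x : ℝ) : 0 ≤ x * sg ε x := by
  unfold sg
  split_ifs with hpos hneg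
  · linarith
  · linarith
  · rw [← mul_div_assoc]
    exact div_nonneg (mul_self_nonneg x) hε

lemma sliding_lyapunov_deriv_nonpos {ε c₁ c₂ : ℝ} (hε : 0 ≤ ε) (hc₁ : 0 ≤ c₁) (hc₂ : 0 ≤ c₂)
    (x : ℝ) : -(c₁ * x * sg ε x) - c₂ * x ^ 2 ≤ 0 := by
  have hsg := mul_nonneg hc₁ (mul_sg_nonneg hε x)
  nlinarith [mul_nonneg hc₂ (sq_nonneg x)]

lemma HasDerivAt.half_sq {f : ℝ → ℝ} {f' t : ℝ} (hf : HasDerivAt f f' t) :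
    HasDerivAt (fun r => (1 / 2 : ℝ) * f r ^ 2) (f t * f') t := by
  refine ((hf.pow 2).const_mul (1 / 2 : ℝ)).congr_deriv ?_
  ring

lemma HasDerivAt.half_sq_of_sliding_mode {ε c₁ c₂ t : ℝ} {s : ℝ → ℝ}
    (hs : HasDerivAt s (-(c₁ * sg ε (s t) + c₂ * s t)) t) :
    HasDerivAt (fun r => (1 / 2 : ℝ) * s r ^ 2) (-(c₁ * s t * sg ε (s t)) - c₂ * s t ^ 2) t := by
  convert hs.half_sq using 1
  ring

lemma sliding_rate_eq_of_torque_law {Iz γ r w acc d q tau : ℝ} (hIz : Iz ≠ 0)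
    (htau : tau = (Iz * (w - γ * r) - d) + -(Iz * q)) (hdyn : acc = (d + tau) / Iz) :
    γ * r + (acc - w) = -q := by
  rw [hdyn, htau]
  field_simp
  ring

theorem yaw_controller_stable_general
    (ε lam γ c₁ c₂ Ix Iy Iz : ℝ) (hε0 : 0 < ε)
    (hc₁ : 0 < c₁) (hc₂ : 0 < c₂) (hIz : Iz ≠ 0)
    (ψ dψ φ θ : ℝ → ℝ)
    (hψ : Differentiable ℝ ψ) (hψ' : Differentiable ℝ (deriv ψ))
    (hdψ : Differentiable ℝ dψ) (hdψ' : Differentiable ℝ (deriv dψ))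
    (e v s tau : ℝ → ℝ)
    (he : e = fun t => ψ t - dψ t)
    (hv : v = fun t => deriv dψ t - lam * e t)
    (hs : s = fun t => γ * e t + (deriv ψ t - v t))
    (htau : ∀ t, tau t
        = (Iz * (deriv v t - γ * (deriv ψ t - deriv dψ t))
            - deriv φ t * deriv θ t * (Ix - Iy))
          + (-(Iz * (c₁ * sg ε (s t) + c₂ * s t))))
    (hdyn : ∀ t, deriv (deriv ψ) t
        = (deriv φ t * deriv θ t * (Ix - Iy) + tau t) / Iz) :
    ∀ t, HasDerivAt (fun r => (1 / 2 : ℝ) * s r ^ 2)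
        (-(c₁ * s t * sg ε (s t)) - c₂ * s t ^ 2) t ∧
      -(c₁ * s t * sg ε (s t)) - c₂ * s t ^ 2 ≤ 0 := by
  intro t
  have he' : HasDerivAt e (deriv ψ t - deriv dψ t) t := by
    subst he
    exact (hψ t).hasDerivAt.sub (hdψ t).hasDerivAt
  have hv_diff : DifferentiableAt ℝ v t := by
    subst hv
    exact (hdψ' t).sub (he'.differentiableAt.const_mul lam)
  have hs' : HasDerivAt s
      (γ * (deriv ψ t - deriv dψ t) + (deriv (deriv ψ) t - deriv v t)) t := by
    subst hs
    exact (he'.const_mul γ).add ((hψ' t).hasDerivAt.sub hv_diff.hasDerivAt)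
  rw [sliding_rate_eq_of_torque_law hIz (htau t) (hdyn t)] at hs'
  exact ⟨hs'.half_sq_of_sliding_mode,
    sliding_lyapunov_deriv_nonpos hε0.le hc₁.le hc₂.le (s t)⟩

/-- Under the yaw-torque law `τ = τ_eq + τ_sw`, the Lyapunov function
`V = (1/2)s²` has derivative `−c₁·s·sg(s) − c₂·s² ≤ 0`; the yaw angle
control system is Lyapunov stable. -/
theorem yaw_controller_stable
    (ε lam γ c₁ c₂ Ix Iy Iz : ℝ) (hε0 : 0 < ε) (hε1 : ε < 1)
    (hlam : 0 < lam) (hγ : 0 < γ) (hc₁ : 0 < c₁) (hc₂ : 0 < c₂) (hIz : Iz ≠ 0)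
    (ψ dψ φ θ : ℝ → ℝ)
    (hψ : Differentiable ℝ ψ) (hψ' : Differentiable ℝ (deriv ψ))
    (hdψ : Differentiable ℝ dψ) (hdψ' : Differentiable ℝ (deriv dψ))
    (hφ : Differentiable ℝ φ) (hφ' : Differentiable ℝ (deriv φ))
    (hθ : Differentiable ℝ θ) (hθ' : Differentiable ℝ (deriv θ))
    (e v s tau : ℝ → ℝ)
    (he : e = fun t => ψ t - dψ t)
    (hv : v = fun t => deriv dψ t - lam * e t)
    (hs : s = fun t => γ * e t + (deriv ψ t - v t))
    (htau : ∀ t, tau t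
        = (Iz * (deriv v t - γ * (deriv ψ t - deriv dψ t))
            - deriv φ t * deriv θ t * (Ix - Iy))
          + (-(Iz * (c₁ * sg ε (s t) + c₂ * s t))))
    (hdyn : ∀ t, deriv (deriv ψ) t
        = (deriv φ t * deriv θ t * (Ix - Iy) + tau t) / Iz) :
    ∀ t, HasDerivAt (fun r => (1 / 2 : ℝ) * s r ^ 2)
        (-(c₁ * s t * sg ε (s t)) - c₂ * s t ^ 2) t ∧
      -(c₁ * s t * sg ε (s t)) - c₂ * s t ^ 2 ≤ 0 :=
  yaw_controller_stable_general ε lam γ c₁ c₂ Ix Iy Iz hε0 hc₁ hc₂ hIz ψ dψ φ θ hψ hψ' hdψ hdψ' e v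
    s tau he hv hs htau hdyn
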